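/- Let X, Y be finite ultrametric spaces and ε ≥ 0 with |diam(X) − diam(Y)| ≤ ε < diam(Y). Write the open partitions X_{o(diam(Y)−ε)} = {X_1,…,X_N} and Y_{o(diam(Y))} = {Y_1,…,Y_M} (blocks of the equivalence relations u_X < diam(Y)−ε and u_Y < diam(Y), respectively). Then there exists a correspondence R between X and Y with dis(R) ≤ ε if and only if there is a surjection Ψ : {1,…,N} → {1,…,M} such that for every j there is a correspondence R_j between ∪_{i ∈ Ψ^{-1}(j)} X_i and Y_j with dis(R_j) ≤ ε. -/
import Mathlib


/-- Diameter of a finite ultrametric space given by a distance function. -/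
noncomputable def uDiam {X : Type*} (uX : X → X → ℝ) : ℝ :=
  sSup {d : ℝ | ∃ x y : X, d = uX x y}

lemma le_uDiam {X : Type*} [Fintype X] (uX : X → X → ℝ) (x y : X) :
    uX x y ≤ uDiam uX := by
  have hfin : ({d : ℝ | ∃ x y : X, d = uX x y}).Finite := by
    have : {d : ℝ | ∃ x y : X, d = uX x y} = Set.range (fun p : X × X => uX p.1 p.2) := by
      ext d; simp [eq_comm]
    rw [this]; exact Set.finite_range _
  exact le_csSup hfin.bddAbove ⟨x, y, rfl⟩

lemma quot_mk_eq_iff {α : Type*} {r : α → α → Prop} (h : Equivalence r) (x y : α) :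
    Quot.mk r x = Quot.mk r y ↔ r x y := by
  rw [Quot.eq]; exact h.eqvGen_iff


/-- Structural theorem for `d_GH` between finite ultrametric spaces: existence of an
`ε`-correspondence between `X` and `Y` is equivalent to the existence of a surjection
between the blocks of certain open partitions together with `ε`-correspondences
between corresponding unions of blocks. -/
theorem dGH_structural {X Y : Type*} [Fintype X] [Fintype Y] [Nonempty X] [Nonempty Y]
    (uX : X → X → ℝ) (uY : Y → Y → ℝ)
    (hXsymm : ∀ x y, uX x y = uX y x)
    (hXzero : ∀ x y, uX x y = 0 ↔ x = y)
    (hXultra : ∀ x y z, uX x z ≤ max (uX x y) (uX y z))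
    (hYsymm : ∀ x y, uY x y = uY y x)
    (hYzero : ∀ x y, uY x y = 0 ↔ x = y)
    (hYultra : ∀ x y z, uY x z ≤ max (uY x y) (uY y z))
    (ε : ℝ) (hε1 : |uDiam uX - uDiam uY| ≤ ε) (hε2 : ε < uDiam uY) :
    (∃ R : Set (X × Y),
        ((∀ x, ∃ y, (x, y) ∈ R) ∧ (∀ y, ∃ x, (x, y) ∈ R)) ∧
        ∀ p ∈ R, ∀ q ∈ R, |uX p.1 q.1 - uY p.2 q.2| ≤ ε) ↔
      (∃ Ψ : Quot (fun a b : X => uX a b < uDiam uY - ε) →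
          Quot (fun a b : Y => uY a b < uDiam uY),
        Function.Surjective Ψ ∧
        ∀ j : Quot (fun a b : Y => uY a b < uDiam uY),
          ∃ Rj : Set (X × Y),
            (∀ p ∈ Rj, Ψ (Quot.mk (fun a b : X => uX a b < uDiam uY - ε) p.1) = j ∧
              Quot.mk (fun a b : Y => uY a b < uDiam uY) p.2 = j) ∧
            (∀ x : X, Ψ (Quot.mk (fun a b : X => uX a b < uDiam uY - ε) x) = j →
              ∃ y : Y, (x, y) ∈ Rj) ∧
            (∀ y : Y, Quot.mk (fun a b : Y => uY a b < uDiam uY) y = j →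
              ∃ x : X, (x, y) ∈ Rj) ∧
            ∀ p ∈ Rj, ∀ q ∈ Rj, |uX p.1 q.1 - uY p.2 q.2| ≤ ε) := by
  set t := uDiam uY with ht
  have hε0 : 0 ≤ ε := le_trans (abs_nonneg _) hε1
  have htpos : 0 < t := lt_of_le_of_lt hε0 hε2
  have htε : 0 < t - ε := sub_pos.mpr hε2
  set rx : X → X → Prop := fun a b => uX a b < t - ε with hrx
  set ry : Y → Y → Prop := fun a b => uY a b < t with hry
  have hrxE : Equivalence rx := by
    refine ⟨fun x => ?_, fun {x y} h => ?_, fun {x y z} h1 h2 => ?_⟩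
    · show uX x x < t - ε; rw [(hXzero x x).mpr rfl]; exact htε
    · show uX y x < t - ε; rw [← hXsymm]; exact h
    · exact lt_of_le_of_lt (hXultra x y z) (max_lt h1 h2)
  have hryE : Equivalence ry := by
    refine ⟨fun x => ?_, fun {x y} h => ?_, fun {x y z} h1 h2 => ?_⟩
    · show uY x x < t; rw [(hYzero x x).mpr rfl]; exact htpos
    · show uY y x < t; rw [← hYsymm]; exact h
    · exact lt_of_le_of_lt (hYultra x y z) (max_lt h1 h2)
  have hXle : ∀ x y, uX x y ≤ t + ε := fun x y => by
    have h1 := le_uDiam uX x y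
    have h2 : uDiam uX - t ≤ ε := le_trans (le_abs_self _) hε1
    linarith
  have hYle : ∀ x y, uY x y ≤ t := fun x y => le_uDiam uY x y
  constructor
  · rintro ⟨R, ⟨h1, h2⟩, hdis⟩
    have f := fun x => (h1 x).choose
    have hf : ∀ x, (x, (h1 x).choose) ∈ R := fun x => (h1 x).choose_spec
    -- key: if (x,y) ∈ R then uY (f x) y < t
    have key : ∀ x y, (x, y) ∈ R → uY (h1 x).choose y < t := by
      intro x y hxy
      have := hdis _ (hf x) _ hxy
      simp only at this
      rw [(hXzero x x).mpr rfl] at this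
      have h3 : uY (h1 x).choose y ≤ ε := by
        rw [abs_sub_comm, abs_le] at this; linarith [this.2]
      linarith
    have hsound : ∀ a b : X, rx a b →
        Quot.mk ry (h1 a).choose = Quot.mk ry (h1 b).choose := by
      intro a b hab
      rw [quot_mk_eq_iff hryE]
      have := hdis _ (hf a) _ (hf b)
      simp only at this
      rw [abs_le] at this
      show uY _ _ < t
      have : uY (h1 a).choose (h1 b).choose ≤ uX a b + ε := by linarith [this.2]
      have hab' : uX a b < t - ε := hab
      linarith
    refine ⟨Quot.lift (fun x => Quot.mk ry (h1 x).choose) hsound, ?_, ?_⟩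
    · intro j
      induction j using Quot.ind with
      | _ y =>
        refine ⟨Quot.mk rx (h2 y).choose, ?_⟩
        show Quot.mk ry (h1 (h2 y).choose).choose = Quot.mk ry y
        rw [quot_mk_eq_iff hryE]
        exact key _ _ (h2 y).choose_spec
    · intro j
      refine ⟨{p | p ∈ R ∧ Quot.lift (fun x => Quot.mk ry (h1 x).choose) hsound
          (Quot.mk rx p.1) = j ∧ Quot.mk ry p.2 = j}, ?_, ?_, ?_, ?_⟩
      · exact fun p hp => ⟨hp.2.1, hp.2.2⟩
      · intro x hx
        refine ⟨(h1 x).choose, hf x, hx, ?_⟩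
        exact hx
      · intro y hy
        refine ⟨(h2 y).choose, (h2 y).choose_spec, ?_, hy⟩
        show Quot.mk ry (h1 (h2 y).choose).choose = j
        rw [← hy, quot_mk_eq_iff hryE]
        exact key _ _ (h2 y).choose_spec
      · exact fun p hp q hq => hdis p hp.1 q hq.1
  · rintro ⟨Ψ, hsurj, hRj⟩
    choose Rj hc1 hc2 hc3 hc4 using hRj
    refine ⟨⋃ j, Rj j, ⟨?_, ?_⟩, ?_⟩
    · intro x
      obtain ⟨y, hy⟩ := hc2 (Ψ (Quot.mk rx x)) x rfl
      exact ⟨y, Set.mem_iUnion.mpr ⟨_, hy⟩⟩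
    · intro y
      obtain ⟨x, hx⟩ := hc3 (Quot.mk ry y) y rfl
      exact ⟨x, Set.mem_iUnion.mpr ⟨_, hx⟩⟩
    · intro p hp q hq
      obtain ⟨j, hpj⟩ := Set.mem_iUnion.mp hp
      obtain ⟨j', hqj⟩ := Set.mem_iUnion.mp hq
      by_cases hjj : j = j'
      · subst hjj; exact hc4 j p hpj q hqj
      · have hp1 := hc1 j p hpj
        have hq1 := hc1 j' q hqj
        have hY2 : ¬ ry p.2 q.2 := by
          rw [← quot_mk_eq_iff hryE]
          rw [hp1.2, hq1.2]; exact hjj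
        have hYeq : uY p.2 q.2 = t :=
          le_antisymm (hYle _ _) (not_lt.mp hY2)
        have hX2 : ¬ rx p.1 q.1 := by
          intro h
          apply hjj
          rw [← hp1.1, ← hq1.1]
          congr 1
          exact Quot.sound h
        have hXlb : t - ε ≤ uX p.1 q.1 := not_lt.mp hX2
        have hXub := hXle p.1 q.1
        rw [hYeq, abs_le]
        constructor <;> linarith
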